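/- arXiv:1811.09158 — 2 statements merged into one kernel-verified Lean document; each statement's English description precedes it below -/
import Mathlib

section
/- Let G_< be a semi-comparability graph, and for each vertex v let f(v) be the size of the largest clique whose <-minimal element is v. Then for each i, the set V_i = {v : f(v) = i} induces a subgraph of G that is a comparability graph of a partial order; more precisely, there are no three vertices a<b<c in V_i with ab, bc edges and ac a non-edge. -/
/-!
If `a < b < c` with `ab`, `bc` edges and `ac` a non-edge, then `b` is adjacent to every vertex of
any clique whose minimum is `c`: for such a vertex `d > c`, a non-edge `bd` would make
`a < b < c < d` a forbidden configuration. Adding `b` to a largest clique with minimum `c` thus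
gives a larger clique with minimum `b`, so `f b > f c` and `b`, `c` lie on different levels.
-/

namespace SimpleGraph

variable {V : Type*} [LinearOrder V] (G : SimpleGraph V)

def minCliqueSizes (v : V) : Set ℕ :=
  {n | ∃ s : Finset V, G.IsNClique n s ∧ v ∈ s ∧ ∀ u ∈ s, v ≤ u}

lemma one_mem_minCliqueSizes (v : V) : 1 ∈ G.minCliqueSizes v :=
  ⟨{v}, isNClique_singleton.mpr rfl, Finset.mem_singleton_self v, by simp⟩

lemma bddAbove_minCliqueSizes [Fintype V] (v : V) : BddAbove (G.minCliqueSizes v) :=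
  ⟨Fintype.card V, fun _ ⟨s, hs, _⟩ => hs.card_eq ▸ s.card_le_univ⟩

lemma sSup_mem_minCliqueSizes [Fintype V] (v : V) :
    sSup (G.minCliqueSizes v) ∈ G.minCliqueSizes v :=
  Nat.sSup_mem ⟨1, G.one_mem_minCliqueSizes v⟩ (G.bddAbove_minCliqueSizes v)

lemma succ_mem_minCliqueSizes {u v : V} {n : ℕ} {s : Finset V} (huv : u < v)
    (hs : G.IsNClique n s) (hmin : ∀ w ∈ s, v ≤ w) (hadj : ∀ w ∈ s, G.Adj u w) :
    n + 1 ∈ G.minCliqueSizes u := by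
  refine ⟨insert u s, hs.insert hadj, Finset.mem_insert_self u s, ?_⟩
  simp only [Finset.mem_insert, forall_eq_or_imp, le_refl, true_and]
  exact fun w hw => huv.le.trans (hmin w hw)

def IsSemiComparability : Prop :=
  ∀ a b c d : V, a < b → b < c → c < d →
    G.Adj a b → G.Adj b c → G.Adj c d → ¬ G.Adj a c → ¬ G.Adj b d → False

variable {G}

lemma IsSemiComparability.adj_of_mem_of_isClique (hG : G.IsSemiComparability) {a b c : V}
    (hab : a < b) (hbc : b < c) (Hab : G.Adj a b) (Hbc : G.Adj b c) (Hac : ¬ G.Adj a c)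
    {s : Finset V} (hs : G.IsClique s) (hcs : c ∈ s) (hmin : ∀ w ∈ s, c ≤ w) :
    ∀ d ∈ s, G.Adj b d := by
  intro d hds
  rcases (hmin d hds).eq_or_lt with rfl | hcd
  · exact Hbc
  · by_contra Hbd
    exact hG a b c d hab hbc hcd Hab Hbc (hs hcs hds hcd.ne) Hac Hbd

lemma IsSemiComparability.sSup_minCliqueSizes_lt [Fintype V] (hG : G.IsSemiComparability)
    {a b c : V} (hab : a < b) (hbc : b < c) (Hab : G.Adj a b) (Hbc : G.Adj b c)
    (Hac : ¬ G.Adj a c) :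
    sSup (G.minCliqueSizes c) < sSup (G.minCliqueSizes b) := by
  obtain ⟨s, hs, hcs, hmin⟩ := G.sSup_mem_minCliqueSizes c
  have hadj := hG.adj_of_mem_of_isClique hab hbc Hab Hbc Hac hs.isClique hcs hmin
  exact Nat.lt_of_succ_le <| le_csSup (G.bddAbove_minCliqueSizes b) <|
    G.succ_mem_minCliqueSizes hbc hs hmin hadj

end SimpleGraph

/-- In a semi-comparability graph, if `f v` is the size of the largest
clique whose `<`-minimal element is `v`, then each level set `{v | f v = i}` induces
a comparability graph: there are no `a < b < c` in the level set with `ab, bc` edges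
and `ac` a non-edge. -/
theorem semiComparability_levels_comparability {V : Type*} [Fintype V] [LinearOrder V]
    (G : SimpleGraph V)
    (hsemi : ∀ a b c d : V, a < b → b < c → c < d →
      G.Adj a b → G.Adj b c → G.Adj c d → ¬ G.Adj a c → ¬ G.Adj b d → False)
    (f : V → ℕ)
    (hf : ∀ v, f v = sSup {n : ℕ | ∃ s : Finset V,
      G.IsNClique n s ∧ v ∈ s ∧ ∀ u ∈ s, v ≤ u}) :
    ∀ (i : ℕ) (a b c : V), f a = i → f b = i → f c = i → a < b → b < c →
      G.Adj a b → G.Adj b c → ¬ G.Adj a c → False := by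
  intro i a b c _ hfb hfc hab hbc Hab Hbc Hac
  have hlt := SimpleGraph.IsSemiComparability.sSup_minCliqueSizes_lt hsemi hab hbc Hab Hbc Hac
  rw [SimpleGraph.minCliqueSizes, SimpleGraph.minCliqueSizes, ← hf, ← hf, hfb, hfc] at hlt
  exact lt_irrefl i hlt
end

section
/- Let G be a double-ordered graph, and let H be any magical double-ordered graph on the same vertex set with the same orders containing all edges of G. If x₁, …, x_r is a mountain-path in G with x₁ <₂ x_r, then x₁x_i ∈ E(H) for every i > 1; in particular x₁x_r ∈ E(H). -/
/-! Since `x 0 <₂ x_r`, in either case of the mountain condition every interior vertex lies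
`<₂`-above `x 0`. Induct along the path, keeping `x 0 <₁ x i` together with the edge
`x 0 x i` in `H`: because `x 0 <₂ x i`, the magical property applied to
`x 0 <₁ x i <₁ x (i+1)` forces the edge `x 0 x (i+1)`. -/

def SimpleGraph.IsMagical {V : Type*} (H : SimpleGraph V) (lt1 lt2 : V → V → Prop) : Prop :=
  ∀ a b c : V, lt1 a b → lt1 b c → H.Adj a b → H.Adj b c → ¬ H.Adj a c → lt2 b a ∧ lt2 b c

namespace SimpleGraph.IsMagical

variable {V : Type*} {H : SimpleGraph V} {lt1 lt2 : V → V → Prop}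

theorem adj_of_lt_left [Std.Asymm lt2] (hH : H.IsMagical lt1 lt2) {a b c : V}
    (hab : lt1 a b) (hbc : lt1 b c) (hHab : H.Adj a b) (hHbc : H.Adj b c) (h2 : lt2 a b) :
    H.Adj a c := by
  by_contra hac
  exact asymm h2 (hH a b c hab hbc hHab hHbc hac).1

theorem adj_zero_of_path [IsTrans V lt1] [Std.Asymm lt2] (hH : H.IsMagical lt1 lt2)
    {n : ℕ} (x : Fin (n + 2) → V)
    (hinc : ∀ i : Fin (n + 1), lt1 (x i.castSucc) (x i.succ))
    (hadj : ∀ i : Fin (n + 1), H.Adj (x i.castSucc) (x i.succ))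
    (hint : ∀ i : Fin (n + 2), i ≠ 0 → i ≠ Fin.last (n + 1) → lt2 (x 0) (x i)) :
    ∀ i : Fin (n + 2), i ≠ 0 → H.Adj (x 0) (x i) ∧ lt1 (x 0) (x i) := by
  refine Fin.induction (fun h => absurd rfl h) fun i ih _ => ?_
  by_cases hi : i.castSucc = 0
  · rw [← hi]
    exact ⟨hadj i, hinc i⟩
  obtain ⟨hHi, hlt⟩ := ih hi
  exact ⟨hH.adj_of_lt_left hlt (hinc i) hHi (hadj i) (hint _ hi (Fin.castSucc_ne_last i)),
    _root_.trans hlt (hinc i)⟩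

end SimpleGraph.IsMagical

/-- If `H` is a magical double-ordered graph containing all edges of `G`,
and `x 0, …, x (r+1)` is a mountain-path in `G` with `x 0 <₂ x (r+1)`, then `x 0` is
adjacent in `H` to every later vertex of the path; in particular to `x (r+1)`. -/
theorem magical_adj_of_mountainPath {V : Type*} (G H : SimpleGraph V)
    (lt1 lt2 : V → V → Prop)
    [IsStrictTotalOrder V lt1] [IsStrictTotalOrder V lt2]
    (hmagH : ∀ a b c : V, lt1 a b → lt1 b c → H.Adj a b → H.Adj b c → ¬ H.Adj a c →
      lt2 b a ∧ lt2 b c)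
    (hGH : G ≤ H)
    (r : ℕ) (x : Fin (r + 2) → V)
    (hinc : ∀ i : Fin (r + 1), lt1 (x i.castSucc) (x i.succ))
    (hadj : ∀ i : Fin (r + 1), G.Adj (x i.castSucc) (x i.succ))
    (hmnt : (∀ i : Fin (r + 2), i ≠ 0 → i ≠ Fin.last (r + 1) → lt2 (x 0) (x i)) ∨
            (∀ i : Fin (r + 2), i ≠ 0 → i ≠ Fin.last (r + 1) →
              lt2 (x (Fin.last (r + 1))) (x i)))
    (hends : lt2 (x 0) (x (Fin.last (r + 1)))) :
    ∀ i : Fin (r + 2), i ≠ 0 → H.Adj (x 0) (x i) := by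
  have hint : ∀ i : Fin (r + 2), i ≠ 0 → i ≠ Fin.last (r + 1) → lt2 (x 0) (x i) := by
    rcases hmnt with hfirst | hlast
    · exact hfirst
    · exact fun i h0 hl => _root_.trans hends (hlast i h0 hl)
  intro i hi
  exact (SimpleGraph.IsMagical.adj_zero_of_path hmagH x hinc (fun j => hGH (hadj j)) hint i hi).1
end
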